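/- arXiv:1803.00673 — 2 statements merged into one kernel-verified Lean document; each statement's English description precedes it below -/
import Mathlib

section
/- Let d_1 ≥ d_2 ≥ ... ≥ d_n be a zero-free graphical degree sequence (n ≥ 2). If d_1 ≥ n − 2, then the sequence is forcibly connected, i.e., every simple graph realizing it is connected. -/
open SimpleGraph Multiset Finset

/-- The multiset of vertex degrees of a simple graph on a finite vertex type. -/
noncomputable def degreeMultiset {V : Type*} [Fintype V] (G : SimpleGraph V) : Multiset ℕ :=
  Finset.univ.val.map fun v => (G.neighborSet v).ncard

/-- A multiset of naturals is graphical if it is the degree multiset of some simple graph. -/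
def IsGraphicalM (m : Multiset ℕ) : Prop :=
  ∃ G : SimpleGraph (Fin (Multiset.card m)), degreeMultiset G = m

/-- A multiset is potentially connected if some realization is connected. -/
def PotentiallyConnectedM (m : Multiset ℕ) : Prop :=
  ∃ G : SimpleGraph (Fin (Multiset.card m)), degreeMultiset G = m ∧ G.Connected

/-- A multiset is forcibly connected if every realization is connected. -/
def ForciblyConnectedM (m : Multiset ℕ) : Prop :=
  ∀ G : SimpleGraph (Fin (Multiset.card m)), degreeMultiset G = m → G.Connected

/-- The multiset of terms of a finite sequence. -/
def seqM {n : ℕ} (d : Fin n → ℕ) : Multiset ℕ :=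
  Finset.univ.val.map d

/-- A sequence is graphical if some simple graph on `Fin n` realizes it. -/
def IsGraphicalSeq {n : ℕ} (d : Fin n → ℕ) : Prop :=
  ∃ G : SimpleGraph (Fin n), degreeMultiset G = seqM d

/-- A sequence is potentially connected if some realization is connected. -/
def PotentiallyConnectedSeq {n : ℕ} (d : Fin n → ℕ) : Prop :=
  ∃ G : SimpleGraph (Fin n), degreeMultiset G = seqM d ∧ G.Connected

/-- A sequence is forcibly connected if every realization is connected. -/
def ForciblyConnectedSeq {n : ℕ} (d : Fin n → ℕ) : Prop :=
  ∀ G : SimpleGraph (Fin n), degreeMultiset G = seqM d → G.Connected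

/- If some vertex `v` has degree at least `n - 2`, its closed neighbourhood misses at most one
vertex `a`. Since `a` is not isolated, its neighbour lies in the closed neighbourhood of `v`,
so every vertex is joined to `v` by a path of length at most two. -/

namespace SimpleGraph

variable {V : Type*} [Fintype V] (G : SimpleGraph V) [DecidableRel G.Adj]

lemma ncard_neighborSet_eq_degree (v : V) : (G.neighborSet v).ncard = G.degree v := by
  rw [degree, neighborFinset_def, Set.ncard_eq_toFinset_card']

lemma degreeMultiset_eq_map_degree : degreeMultiset G = univ.val.map fun v => G.degree v := by
  simp only [degreeMultiset, ncard_neighborSet_eq_degree]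

variable {G}

lemma eq_of_not_adj_of_card_sub_two_le_degree {v a b : V}
    (hv : Fintype.card V - 2 ≤ G.degree v) (hav : a ≠ v) (hva : ¬ G.Adj v a)
    (hbv : b ≠ v) (hvb : ¬ G.Adj v b) : a = b := by
  classical
  have hcard : (insert v (G.neighborFinset v))ᶜ.card ≤ 1 := by
    rw [card_compl, card_insert_of_notMem (G.notMem_neighborFinset_self v),
      card_neighborFinset_eq_degree]
    omega
  exact card_le_one.mp hcard a (by simp [hav, hva]) b (by simp [hbv, hvb])

theorem connected_of_card_sub_two_le_degree {v : V} (hv : Fintype.card V - 2 ≤ G.degree v)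
    (hpos : ∀ u, 0 < G.degree u) : G.Connected := by
  refine G.connected_iff_exists_forall_reachable.mpr ⟨v, fun a => ?_⟩
  by_cases hav : a = v
  · subst hav; rfl
  by_cases hva : G.Adj v a
  · exact hva.reachable
  obtain ⟨w, haw⟩ := (G.degree_pos_iff_exists_adj a).mp (hpos a)
  by_cases hwv : w = v
  · exact (hwv ▸ haw).symm.reachable
  by_cases hvw : G.Adj v w
  · exact hvw.reachable.trans haw.symm.reachable
  · exact absurd (eq_of_not_adj_of_card_sub_two_le_degree hv hav hva hwv hvw) (G.ne_of_adj haw)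

end SimpleGraph

lemma exists_degree_eq_iff {n : ℕ} {d : Fin n → ℕ} {G : SimpleGraph (Fin n)}
    [DecidableRel G.Adj] (hG : degreeMultiset G = seqM d) (k : ℕ) :
    (∃ u, G.degree u = k) ↔ ∃ i, d i = k := by
  simpa [degreeMultiset_eq_map_degree, seqM] using congrArg (k ∈ ·) hG

theorem stmt0 {n : ℕ} (hn : 2 ≤ n) (d : Fin n → ℕ)
    (hpos : ∀ i, 0 < d i)
    (h : n - 2 ≤ d ⟨0, by omega⟩) :
    ForciblyConnectedSeq d := by
  classical
  intro G hG
  obtain ⟨v, hv⟩ := (exists_degree_eq_iff hG _).mpr ⟨_, rfl⟩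
  refine connected_of_card_sub_two_le_degree (v := v) (by simpa [hv] using h) fun u => ?_
  obtain ⟨i, hi⟩ := (exists_degree_eq_iff hG _).mp ⟨u, rfl⟩
  exact hi ▸ hpos i
end

section
/- A zero-free graphical degree sequence d_1 ≥ d_2 ≥ ... ≥ d_n is potentially connected (has at least one connected realization) if and only if d_1 + d_2 + ... + d_n ≥ 2n − 2. -/
open SimpleGraph Multiset Finset

/-!
A connected graph on `n` vertices has at least `n - 1` edges, which by the handshake lemma gives
`2n - 2 ≤ ∑ dᵢ`. Conversely, among the realizations of `d` take one whose reachability relation is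
maximal. If it were disconnected, then, having at least `n - 1` edges, it could not be a forest,
so some edge `ab` lies on a cycle; and since no vertex is isolated, a component not containing `a`
has an edge `xy`. The 2-switch replacing `ab`, `xy` by `ax`, `by` preserves all degrees, keeps
`a` and `b` joined along the rest of the cycle and merges the two components, contradicting
maximality.
-/

namespace SimpleGraph

variable {V : Type*} {G : SimpleGraph V}

theorem reachable_le_of_adj_le_reachable {G' : SimpleGraph V} (h : G.Adj ≤ G'.Reachable) :
    G.Reachable ≤ G'.Reachable := by
  rw [reachable_eq_reflTransGen]
  exact Relation.reflTransGen_le_of_equivalence_of_le G'.reachable_is_equivalence h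

theorem Reachable.deleteEdges_of_not_reachable {u w x : V} (h : G.Reachable u w)
    (hx : ¬G.Reachable u x) (y : V) : (G.deleteEdges {s(x, y)}).Reachable u w := by
  classical
  obtain ⟨p⟩ := h
  exact reachable_deleteEdges_iff_exists_walk.2
    ⟨p, fun he => hx ⟨p.takeUntil x (p.fst_mem_support_of_mem_edges he)⟩⟩

theorem IsAcyclic.ncard_edgeSet_add_two_le [Finite V] [Nonempty V] (hG : G.IsAcyclic)
    (hc : ¬G.Connected) : G.edgeSet.ncard + 2 ≤ Nat.card V := by
  obtain ⟨u, v, huv⟩ : ∃ u v, ¬G.Reachable u v := by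
    by_contra! h
    exact hc ⟨h⟩
  obtain ⟨T, hle, -, hT⟩ := connected_top.exists_isTree_le_of_le_of_isAcyclic le_top
    (hG.sup_edge_of_not_reachable huv)
  have hlt : G < T :=
    (G.lt_sup_edge u v (fun h : u = v => huv (h ▸ .rfl)) fun h => huv h.reachable).trans_le hle
  have hT_card := (isTree_iff_connected_and_card.1 hT).2
  rw [Nat.card_coe_set_eq] at hT_card
  have := Set.ncard_lt_ncard (edgeSet_strict_mono hlt)
  omega

theorem sum_ncard_neighborSet [Fintype V] (G : SimpleGraph V) :
    ∑ v, (G.neighborSet v).ncard = 2 * G.edgeSet.ncard := by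
  classical
  calc ∑ v, (G.neighborSet v).ncard = ∑ v, G.degree v := by
        simp_rw [← Nat.card_coe_set_eq, Nat.card_eq_fintype_card, card_neighborSet_eq_degree]
    _ = 2 * #G.edgeFinset := G.sum_degrees_eq_twice_card_edges
    _ = 2 * G.edgeSet.ncard := by rw [← Set.ncard_coe_finset, coe_edgeFinset]

section TwoSwitch

variable {a b x y : V}

def twoSwitch (G : SimpleGraph V) (a b x y : V) : SimpleGraph V :=
  G.deleteEdges {s(a, b), s(x, y)} ⊔ edge a x ⊔ edge b y

theorem twoSwitch_comm : G.twoSwitch a b x y = G.twoSwitch x y a b := by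
  ext u w
  simp only [twoSwitch, sup_adj, deleteEdges_adj, edge_adj, Set.mem_insert_iff,
    Set.mem_singleton_iff, Sym2.eq_iff]
  tauto

theorem twoSwitch_swap : G.twoSwitch a b x y = G.twoSwitch b a y x := by
  ext u w
  simp only [twoSwitch, sup_adj, deleteEdges_adj, edge_adj, Set.mem_insert_iff,
    Set.mem_singleton_iff, Sym2.eq_iff]
  tauto

theorem neighborSet_twoSwitch_left (hab : a ≠ b) (hax : a ≠ x) (hay : a ≠ y) :
    (G.twoSwitch a b x y).neighborSet a = insert x (G.neighborSet a \ {b}) := by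
  ext w
  simp only [twoSwitch, mem_neighborSet, sup_adj, deleteEdges_adj, edge_adj, Set.mem_insert_iff,
    Set.mem_singleton_iff, Set.mem_sdiff, Sym2.eq_iff]
  grind [Adj.ne]

theorem neighborSet_twoSwitch_of_ne {v : V} (ha : v ≠ a) (hb : v ≠ b) (hx : v ≠ x)
    (hy : v ≠ y) : (G.twoSwitch a b x y).neighborSet v = G.neighborSet v := by
  ext w
  simp only [twoSwitch, mem_neighborSet, sup_adj, deleteEdges_adj, edge_adj, Set.mem_insert_iff,
    Set.mem_singleton_iff, Sym2.eq_iff]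
  tauto

theorem ncard_neighborSet_twoSwitch_left [Finite V] (hab : G.Adj a b) (hax : ¬G.Adj a x)
    (hne_ax : a ≠ x) (hne_ay : a ≠ y) :
    ((G.twoSwitch a b x y).neighborSet a).ncard = (G.neighborSet a).ncard := by
  rw [neighborSet_twoSwitch_left hab.ne hne_ax hne_ay]
  exact Set.ncard_exchange hax hab

theorem ncard_neighborSet_twoSwitch [Finite V] (hab : G.Adj a b) (hxy : G.Adj x y)
    (hax : ¬G.Adj a x) (hby : ¬G.Adj b y) (hne_ax : a ≠ x) (hne_by : b ≠ y) (v : V) :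
    ((G.twoSwitch a b x y).neighborSet v).ncard = (G.neighborSet v).ncard := by
  have hne_ay : a ≠ y := by rintro rfl; exact hax hxy.symm
  have hne_bx : b ≠ x := by rintro rfl; exact hax hab
  obtain rfl | hva := eq_or_ne v a
  · exact ncard_neighborSet_twoSwitch_left hab hax hne_ax hne_ay
  obtain rfl | hvb := eq_or_ne v b
  · rw [twoSwitch_swap]
    exact ncard_neighborSet_twoSwitch_left hab.symm hby hne_by hne_bx
  obtain rfl | hvx := eq_or_ne v x
  · rw [twoSwitch_comm]
    exact ncard_neighborSet_twoSwitch_left hxy (fun h => hax h.symm) hne_ax.symm hne_bx.symm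
  obtain rfl | hvy := eq_or_ne v y
  · rw [twoSwitch_comm, twoSwitch_swap]
    exact ncard_neighborSet_twoSwitch_left hxy.symm (fun h => hby h.symm) hne_by.symm hne_ay.symm
  rw [neighborSet_twoSwitch_of_ne hva hvb hvx hvy]

theorem reachable_twoSwitch (hb : (G.deleteEdges {s(a, b)}).Reachable a b) (hxy : G.Adj x y)
    (hax : ¬G.Reachable a x) :
    G.Reachable ≤ (G.twoSwitch a b x y).Reachable ∧ (G.twoSwitch a b x y).Reachable a x := by
  have hab : G.Reachable a b := hb.mono (deleteEdges_le _)
  have hne_ax : a ≠ x := by rintro rfl; exact hax .rfl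
  have hne_by : b ≠ y := by rintro rfl; exact hax (hab.trans hxy.reachable.symm)
  have hle : G.deleteEdges {s(a, b), s(x, y)} ≤ G.twoSwitch a b x y :=
    le_sup_left.trans le_sup_left
  have hab_sw : (G.twoSwitch a b x y).Reachable a b := by
    have := hb.deleteEdges_of_not_reachable (fun h => hax (h.mono (deleteEdges_le _))) y
    rw [deleteEdges_deleteEdges, Set.singleton_union] at this
    exact this.mono hle
  have hax_sw : (G.twoSwitch a b x y).Adj a x := by simp [twoSwitch, edge_adj, hne_ax]
  have hby_sw : (G.twoSwitch a b x y).Adj b y := by simp [twoSwitch, edge_adj, hne_by]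
  have hxy_sw : (G.twoSwitch a b x y).Reachable x y :=
    hax_sw.reachable.symm.trans (hab_sw.trans hby_sw.reachable)
  refine ⟨reachable_le_of_adj_le_reachable fun u w huw => ?_, hax_sw.reachable⟩
  by_cases he : s(u, w) ∈ ({s(a, b), s(x, y)} : Set (Sym2 V))
  · rcases he with he | he <;> rcases Sym2.eq_iff.1 he with ⟨rfl, rfl⟩ | ⟨rfl, rfl⟩
    exacts [hab_sw, hab_sw.symm, hxy_sw, hxy_sw.symm]
  · exact (hle (deleteEdges_adj.2 ⟨huw, he⟩)).reachable

theorem exists_ncard_neighborSet_eq_reachable_lt [Finite V] (hab : G.Adj a b)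
    (hb : ¬G.IsBridge s(a, b)) (hxy : G.Adj x y) (hax : ¬G.Reachable a x) :
    ∃ H : SimpleGraph V, (∀ v, (H.neighborSet v).ncard = (G.neighborSet v).ncard) ∧
      G.Reachable < H.Reachable := by
  have hby : ¬G.Reachable b y := fun h => hax (hab.reachable.trans (h.trans hxy.reachable.symm))
  obtain ⟨hle, hax_sw⟩ := reachable_twoSwitch (not_not.1 hb) hxy hax
  refine ⟨G.twoSwitch a b x y, ncard_neighborSet_twoSwitch hab hxy (fun h => hax h.reachable)
    (fun h => hby h.reachable) (fun h => hax (h ▸ .rfl)) (fun h => hby (h ▸ .rfl)),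
    lt_of_le_not_ge hle fun h => hax (h _ _ hax_sw)⟩

end TwoSwitch

theorem exists_connected_ncard_neighborSet_eq [Fintype V] [Nonempty V]
    (hdeg : ∀ v, (G.neighborSet v).ncard ≠ 0) (hE : Nat.card V ≤ G.edgeSet.ncard + 1) :
    ∃ H : SimpleGraph V, (∀ v, (H.neighborSet v).ncard = (G.neighborSet v).ncard) ∧
      H.Connected := by
  obtain ⟨H, hmax⟩ := Set.Finite.exists_maximalFor (fun H : SimpleGraph V => H.Reachable)
    {H | ∀ v, (H.neighborSet v).ncard = (G.neighborSet v).ncard} (Set.toFinite _)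
    ⟨G, fun _ => rfl⟩
  have hH : ∀ v, (H.neighborSet v).ncard = (G.neighborSet v).ncard := hmax.prop
  refine ⟨H, hH, by_contra fun hc => ?_⟩
  have hHE : H.edgeSet.ncard = G.edgeSet.ncard := by
    have h := sum_ncard_neighborSet H
    rw [Finset.sum_congr rfl fun v _ => hH v, sum_ncard_neighborSet] at h
    omega
  obtain ⟨a, b, hab, hb⟩ : ∃ a b, H.Adj a b ∧ ¬H.IsBridge s(a, b) := by
    have : ¬H.IsAcyclic := fun h => by have := h.ncard_edgeSet_add_two_le hc; omega
    simpa [isAcyclic_iff_forall_adj_isBridge] using this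
  obtain ⟨x, hax⟩ : ∃ x, ¬H.Reachable a x := by
    simp only [connected_iff_exists_forall_reachable, not_exists, not_forall] at hc
    exact hc a
  obtain ⟨y, hxy⟩ := Set.nonempty_of_ncard_ne_zero ((hH x).trans_ne (hdeg x))
  obtain ⟨H', hH', hlt⟩ := exists_ncard_neighborSet_eq_reachable_lt hab hb hxy hax
  exact hmax.not_prop_of_gt hlt fun v => (hH' v).trans (hH v)

end SimpleGraph

theorem sum_degreeMultiset {V : Type*} [Fintype V] (G : SimpleGraph V) :
    (degreeMultiset G).sum = 2 * G.edgeSet.ncard :=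
  G.sum_ncard_neighborSet

theorem sum_seqM {n : ℕ} (d : Fin n → ℕ) : (seqM d).sum = ∑ i, d i := rfl

theorem ncard_neighborSet_mem_degreeMultiset {V : Type*} [Fintype V] (G : SimpleGraph V) (v : V) :
    (G.neighborSet v).ncard ∈ degreeMultiset G :=
  Multiset.mem_map_of_mem _ (Finset.mem_univ v)

theorem degreeMultiset_congr {V : Type*} [Fintype V] {G H : SimpleGraph V}
    (h : ∀ v, (H.neighborSet v).ncard = (G.neighborSet v).ncard) :
    degreeMultiset H = degreeMultiset G :=
  Multiset.map_congr rfl fun v _ => h v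

theorem stmt4_general {n : ℕ} (hn : 1 ≤ n) (d : Fin n → ℕ)
    (hpos : ∀ i, 0 < d i) (hg : IsGraphicalSeq d) :
    PotentiallyConnectedSeq d ↔ 2 * n - 2 ≤ ∑ i, d i := by
  have : Nonempty (Fin n) := ⟨⟨0, hn⟩⟩
  constructor
  · rintro ⟨G, hGd, hGc⟩
    have hsum := sum_degreeMultiset G
    rw [hGd, sum_seqM] at hsum
    have hE := hGc.card_vert_le_card_edgeSet_add_one
    rw [Nat.card_eq_fintype_card, Fintype.card_fin, Nat.card_coe_set_eq] at hE
    omega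
  · intro hsum
    obtain ⟨G, hGd⟩ := hg
    have hdeg : ∀ v, (G.neighborSet v).ncard ≠ 0 := fun v => by
      obtain ⟨i, -, hi⟩ := Multiset.mem_map.1 (hGd ▸ ncard_neighborSet_mem_degreeMultiset G v)
      exact hi ▸ (hpos i).ne'
    have hE := sum_degreeMultiset G
    rw [hGd, sum_seqM] at hE
    obtain ⟨H, hH, hc⟩ := SimpleGraph.exists_connected_ncard_neighborSet_eq hdeg
      (by rw [Nat.card_eq_fintype_card, Fintype.card_fin]; omega)
    exact ⟨H, (degreeMultiset_congr hH).trans hGd, hc⟩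

theorem stmt4 {n : ℕ} (hn : 1 ≤ n) (d : Fin n → ℕ) (hanti : Antitone d)
    (hpos : ∀ i, 0 < d i) (hg : IsGraphicalSeq d) :
    PotentiallyConnectedSeq d ↔ 2 * n - 2 ≤ ∑ i, d i :=
  stmt4_general hn d hpos hg
end
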